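/- Let (μ_t) = (1/n) Σ_{i=1}^n δ_{x_i(t)} where each x_i : I → ℝ^d is continuously differentiable. Then the metric derivative of (μ_t) with respect to the sliced Wasserstein distance satisfies |μ'|_{SW}(t)² = (1/d) |μ'|_{W}(t)², where |μ'|_{W}(t)² = (1/n) Σ_{i=1}^n |x_i'(t)|², provided the particles remain distinct so that |μ'|_W(t)² = (1/n)Σ|x_i'(t)|². -/

import Mathlib

open MeasureTheory Metric Filter Topology
open scoped ENNReal RealInnerProductSpace Pointwise

noncomputable section

abbrev Euc (d : ℕ) := EuclideanSpace ℝ (Fin d)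

/-- The normalized uniform (rotation-invariant) probability measure on the unit sphere. -/
def uniformSphere (d : ℕ) : Measure (sphere (0 : Euc d) 1) :=
  (((volume : Measure (Euc d)).toSphere) Set.univ)⁻¹ • (volume : Measure (Euc d)).toSphere

/-- Couplings (transport plans) between two measures. -/
def Coupling {X : Type*} [MeasurableSpace X] (μ ν : Measure X) : Set (Measure (X × X)) :=
  {γ | γ.map Prod.fst = μ ∧ γ.map Prod.snd = ν}

/-- Squared 2-Wasserstein distance. -/
def W2sq {X : Type*} [MeasurableSpace X] [Dist X] (μ ν : Measure X) : ℝ≥0∞ :=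
  ⨅ (γ : Measure (X × X)) (_ : γ ∈ Coupling μ ν),
    ∫⁻ p, ENNReal.ofReal (dist p.1 p.2 ^ 2) ∂γ

/-- 2-Wasserstein distance. -/
def W2 {X : Type*} [MeasurableSpace X] [Dist X] (μ ν : Measure X) : ℝ≥0∞ :=
  (W2sq μ ν) ^ (1/2 : ℝ)

/-- Projection (pushforward) of a measure on ℝ^d onto the direction θ. -/
def projMeas (d : ℕ) (μ : Measure (Euc d)) (θ : sphere (0 : Euc d) 1) : Measure ℝ :=
  μ.map (fun x => ⟪x, (θ : Euc d)⟫)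

/-- Squared sliced 2-Wasserstein distance: sphere average of squared Wasserstein distances of
projections. -/
def SW2sq (d : ℕ) (μ ν : Measure (Euc d)) : ℝ≥0∞ :=
  ∫⁻ θ, W2sq (projMeas d μ θ) (projMeas d ν θ) ∂(uniformSphere d)

/-- Sliced 2-Wasserstein distance. -/
def SW2 (d : ℕ) (μ ν : Measure (Euc d)) : ℝ≥0∞ :=
  (SW2sq d μ ν) ^ (1/2 : ℝ)

/-- Finite second moment. -/
def FiniteSecondMoment {X : Type*} [MeasurableSpace X] [Norm X] (μ : Measure X) : Prop :=
  ∫⁻ x, ENNReal.ofReal (‖x‖ ^ 2) ∂μ < ⊤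

/-- Narrow (weak) convergence of a sequence of measures. -/
def NarrowTendsto {X : Type*} [MeasurableSpace X] [TopologicalSpace X]
    (μs : ℕ → Measure X) (μ : Measure X) : Prop :=
  ∀ f : BoundedContinuousFunction X ℝ,
    Tendsto (fun k => ∫ x, f x ∂(μs k)) atTop (𝓝 (∫ x, f x ∂μ))

end

/-- Real-valued sliced Wasserstein distance. -/
noncomputable def SW2r (d : ℕ) (μ ν : Measure (Euc d)) : ℝ := (SW2 d μ ν).toReal

/-! Fix `t` and a direction `θ`. The projected configurations at times `s` and `t` are
empirical measures on `ℝ`. The identity coupling bounds their squared `W₂` distance by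
`(1/n) Σ_i ⟪x_i(s) - x_i(t), θ⟫²`, and every coupling costs at least
`(1/n) Σ_j min_i ⟪x_i(s) - x_j(t), θ⟫²`. For almost every `θ` the projections of the points
`x_j(t)` are distinct, so for `s` near `t` the minimum sits at `i = j` and the two bounds agree.
After dividing by `(s - t)²`, dominated convergence on the sphere gives the limit
`(1/n) Σ_i ⨍ ⟪v_i, θ⟫² dθ`, and rotation invariance of the sphere measure gives
`⨍ ⟪w, θ⟫² dθ = ‖w‖² / d`. -/

section Empirical

variable {X : Type*} [MeasurableSpace X] {n : ℕ}

noncomputable def empirical (a : Fin n → X) : Measure X :=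
  (n : ℝ≥0∞)⁻¹ • ∑ i, Measure.dirac (a i)

theorem map_empirical {Y : Type*} [MeasurableSpace Y] {f : X → Y} (hf : Measurable f)
    (a : Fin n → X) : (empirical a).map f = empirical (f ∘ a) := by
  rw [empirical, Measure.map_smul, ← Measure.mapₗ_apply_of_measurable hf, map_sum]
  simp [Measure.mapₗ_apply_of_measurable hf, Measure.map_dirac' hf, empirical]

variable [MeasurableSingletonClass X]

theorem lintegral_empirical (a : Fin n → X) (g : X → ℝ≥0∞) :
    ∫⁻ y, g y ∂empirical a = (n : ℝ≥0∞)⁻¹ * ∑ i, g (a i) := by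
  simp [empirical]

theorem ae_empirical_mem_range (a : Fin n → X) : ∀ᵐ y ∂empirical a, y ∈ Set.range a := by
  simp [empirical]

theorem W2sq_empirical_le [Dist X] (a b : Fin n → X) :
    W2sq (empirical a) (empirical b) ≤
      (n : ℝ≥0∞)⁻¹ * ∑ i, ENNReal.ofReal (dist (a i) (b i) ^ 2) := by
  have hγ : empirical (fun i => (a i, b i)) ∈ Coupling (empirical a) (empirical b) :=
    ⟨map_empirical measurable_fst _, map_empirical measurable_snd _⟩
  refine (iInf₂_le _ hγ).trans_eq ?_
  rw [lintegral_empirical]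

theorem le_W2sq_empirical [Dist X] (a b : Fin n → X) :
    (n : ℝ≥0∞)⁻¹ * ∑ j, ⨅ i, ENNReal.ofReal (dist (a i) (b j) ^ 2) ≤
      W2sq (empirical a) (empirical b) := by
  refine le_iInf₂ fun γ ⟨hγa, hγb⟩ => ?_
  have hfst : ∀ᵐ p ∂γ, p.1 ∈ Set.range a :=
    ae_of_ae_map measurable_fst.aemeasurable (hγa ▸ ae_empirical_mem_range a)
  calc (n : ℝ≥0∞)⁻¹ * ∑ j, ⨅ i, ENNReal.ofReal (dist (a i) (b j) ^ 2)
      = ∫⁻ y, ⨅ i, ENNReal.ofReal (dist (a i) y ^ 2) ∂(γ.map Prod.snd) := by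
        rw [hγb, lintegral_empirical]
    _ ≤ ∫⁻ p, ⨅ i, ENNReal.ofReal (dist (a i) p.2 ^ 2) ∂γ := lintegral_map_le _ _
    _ ≤ ∫⁻ p, ENNReal.ofReal (dist p.1 p.2 ^ 2) ∂γ := by
        refine lintegral_mono_ae (hfst.mono fun p ⟨i, hi⟩ => ?_)
        exact hi ▸ iInf_le _ i

end Empirical

theorem eventually_iInf_dist_sq_eq {Y ι : Type*} [MetricSpace Y] {n : ℕ} {l : Filter ι}
    {a : ι → Fin n → Y} {b : Fin n → Y} (hb : Function.Injective b)
    (ha : ∀ i, Tendsto (a · i) l (𝓝 (b i))) :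
    ∀ᶠ s in l, ∀ j, ⨅ i, ENNReal.ofReal (dist (a s i) (b j) ^ 2) =
      ENNReal.ofReal (dist (a s j) (b j) ^ 2) := by
  have hclose : ∀ i j, ∀ᶠ s in l, dist (a s j) (b j) ≤ dist (a s i) (b j) := by
    intro i j
    rcases eq_or_ne i j with rfl | hij
    · exact .of_forall fun _ => le_rfl
    · have hj : Tendsto (fun s => dist (a s j) (b j)) l (𝓝 0) :=
        tendsto_iff_dist_tendsto_zero.1 (ha j)
      have hi : Tendsto (fun s => dist (a s i) (b j)) l (𝓝 (dist (b i) (b j))) :=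
        (ha i).dist tendsto_const_nhds
      exact (hj.eventually_lt hi (dist_pos.2 (hb.ne hij))).mono fun _ => le_of_lt
  filter_upwards [eventually_all.2 fun j => eventually_all.2 fun i => hclose i j] with s hs j
  exact le_antisymm (iInf_le _ j) (le_iInf fun i => ENNReal.ofReal_le_ofReal
    (pow_le_pow_left₀ dist_nonneg (hs j i) 2))

section Sphere

variable {E : Type*} [NormedAddCommGroup E] [NormedSpace ℝ E]

def LinearIsometryEquiv.restrictUnitSphere (e : E ≃ₗᵢ[ℝ] E) :
    sphere (0 : E) 1 → sphere (0 : E) 1 :=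
  fun θ => ⟨e θ, by simp⟩

theorem LinearIsometryEquiv.continuous_restrictUnitSphere (e : E ≃ₗᵢ[ℝ] E) :
    Continuous e.restrictUnitSphere :=
  (e.continuous.comp continuous_subtype_val).subtype_mk _

variable [MeasurableSpace E] [BorelSpace E]

theorem Measure.map_restrictUnitSphere_toSphere (μ : Measure E) (e : E ≃ₗᵢ[ℝ] E)
    (he : MeasurePreserving e μ μ) :
    μ.toSphere.map e.restrictUnitSphere = μ.toSphere := by
  have hm := e.continuous_restrictUnitSphere.measurable
  ext S hS
  have hcone : Set.Ioo (0 : ℝ) 1 • ((↑) '' (e.restrictUnitSphere ⁻¹' S) : Set E) =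
      e ⁻¹' (Set.Ioo (0 : ℝ) 1 • ((↑) '' S)) := by
    ext x
    simp only [Set.mem_smul, Set.mem_image, Set.mem_preimage]
    constructor
    · rintro ⟨c, hc, _, ⟨θ, hθ, rfl⟩, rfl⟩
      exact ⟨c, hc, _, ⟨_, hθ, rfl⟩, (map_smul e c (θ : E)).symm⟩
    · rintro ⟨c, hc, _, ⟨ψ, hψ, rfl⟩, hx⟩
      refine ⟨c, hc, _, ⟨e.symm.restrictUnitSphere ψ, ?_, rfl⟩, ?_⟩
      · convert hψ
        ext
        simp [LinearIsometryEquiv.restrictUnitSphere]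
      · simp [LinearIsometryEquiv.restrictUnitSphere, ← map_smul, hx]
  rw [Measure.map_apply hm hS, μ.toSphere_apply' (hm hS), μ.toSphere_apply' hS, hcone]
  congr 1
  exact (show MeasurePreserving e.toHomeomorph.toMeasurableEquiv μ μ from he)
    |>.measure_preimage_equiv _

variable {F : Type*} [NormedAddCommGroup F] [InnerProductSpace ℝ F] [FiniteDimensional ℝ F]
  [MeasurableSpace F] [BorelSpace F]

theorem lintegral_inner_sq_toSphere_eq_of_norm_eq {u w : F} (h : ‖u‖ = ‖w‖) :
    ∫⁻ θ, ENNReal.ofReal (⟪u, (θ : F)⟫ ^ 2) ∂(volume : Measure F).toSphere =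
      ∫⁻ θ, ENNReal.ofReal (⟪w, (θ : F)⟫ ^ 2) ∂(volume : Measure F).toSphere := by
  set e := (ℝ ∙ (u - w))ᗮ.reflection
  have hmeas : Measurable fun θ : sphere (0 : F) 1 => ENNReal.ofReal (⟪w, (θ : F)⟫ ^ 2) := by
    fun_prop
  conv_rhs => rw [← Measure.map_restrictUnitSphere_toSphere _ e e.measurePreserving,
    lintegral_map hmeas e.continuous_restrictUnitSphere.measurable, ← Submodule.reflection_sub h]
  simp [LinearIsometryEquiv.restrictUnitSphere, e]

theorem Measure.toSphere_setOf_inner_eq_zero (μ : Measure F) [μ.IsAddHaarMeasure] {w : F}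
    (hw : w ≠ 0) : μ.toSphere {θ | ⟪w, (θ : F)⟫ = 0} = 0 := by
  have hclosed : IsClosed {θ : sphere (0 : F) 1 | ⟪w, (θ : F)⟫ = 0} :=
    isClosed_eq (by fun_prop) continuous_const
  have hne : (ℝ ∙ w)ᗮ ≠ ⊤ := by simpa [Submodule.orthogonal_eq_top_iff] using hw
  rw [μ.toSphere_apply' hclosed.measurableSet]
  refine mul_eq_zero_of_right _ (measure_mono_null ?_ (Measure.addHaar_submodule μ _ hne))
  rintro _ ⟨c, -, _, ⟨θ, hθ, rfl⟩, rfl⟩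
  simp_all [Submodule.mem_orthogonal_singleton_iff_inner_right, inner_smul_right]

end Sphere

section UniformSphere

variable {d : ℕ}

theorem isProbabilityMeasure_uniformSphere (hd : 0 < d) :
    IsProbabilityMeasure (uniformSphere d) := by
  refine ⟨ENNReal.inv_mul_cancel ?_ (measure_ne_top _ _)⟩
  simp [hd.ne', (measure_ball_pos _ _ one_pos).ne']

theorem ae_uniformSphere_inner_ne_zero {w : Euc d} (hw : w ≠ 0) :
    ∀ᵐ θ : sphere (0 : Euc d) 1 ∂uniformSphere d, ⟪w, (θ : Euc d)⟫ ≠ 0 :=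
  have h := Measure.toSphere_setOf_inner_eq_zero (volume : Measure (Euc d)) hw
  Measure.ae_smul_measure (measure_eq_zero_iff_ae_notMem.1 h) _

theorem lintegral_inner_sq_uniformSphere (hd : 0 < d) (w : Euc d) :
    ∫⁻ θ, ENNReal.ofReal (⟪w, (θ : Euc d)⟫ ^ 2) ∂uniformSphere d =
      ENNReal.ofReal (‖w‖ ^ 2) / d := by
  have := isProbabilityMeasure_uniformSphere hd
  have hnorm_eq : ∀ u : Euc d, ‖u‖ = ‖w‖ →
      ∫⁻ θ, ENNReal.ofReal (⟪u, (θ : Euc d)⟫ ^ 2) ∂uniformSphere d =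
        ∫⁻ θ, ENNReal.ofReal (⟪w, (θ : Euc d)⟫ ^ 2) ∂uniformSphere d := fun u h => by
    rw [uniformSphere, lintegral_smul_measure, lintegral_smul_measure,
      lintegral_inner_sq_toSphere_eq_of_norm_eq h]
  set b := EuclideanSpace.basisFun (Fin d) ℝ
  have hsum : ∀ θ : sphere (0 : Euc d) 1,
      ∑ i, ENNReal.ofReal (⟪‖w‖ • b i, (θ : Euc d)⟫ ^ 2) = ENNReal.ofReal (‖w‖ ^ 2) := by
    intro θ
    rw [← ENNReal.ofReal_sum_of_nonneg fun _ _ => sq_nonneg _]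
    simp [real_inner_smul_left, mul_pow, ← Finset.mul_sum, b.sum_sq_inner_right]
  rw [ENNReal.eq_div_iff (by simp [hd.ne']) (by simp)]
  calc (d : ℝ≥0∞) * ∫⁻ θ, ENNReal.ofReal (⟪w, (θ : Euc d)⟫ ^ 2) ∂uniformSphere d
      = ∑ i, ∫⁻ θ, ENNReal.ofReal (⟪‖w‖ • b i, (θ : Euc d)⟫ ^ 2) ∂uniformSphere d := by
        simp [hnorm_eq _ (by simp [norm_smul] : ‖‖w‖ • b _‖ = ‖w‖)]
    _ = ENNReal.ofReal (‖w‖ ^ 2) := by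
        rw [← lintegral_finsetSum _ fun _ _ => by fun_prop]
        simp [hsum]

theorem ae_injective_inner_uniformSphere {ι : Type*} [Countable ι] {a : ι → Euc d}
    (ha : Function.Injective a) :
    ∀ᵐ θ : sphere (0 : Euc d) 1 ∂uniformSphere d,
      Function.Injective fun i => ⟪a i, (θ : Euc d)⟫ := by
  have h : ∀ᵐ θ : sphere (0 : Euc d) 1 ∂uniformSphere d,
      ∀ i j, i ≠ j → ⟪a i - a j, (θ : Euc d)⟫ ≠ 0 := by
    simp only [ae_all_iff, eventually_imp_distrib_left]
    exact fun i j hij => ae_uniformSphere_inner_ne_zero (sub_ne_zero.2 (ha.ne hij))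
  filter_upwards [h] with θ hθ i j hij
  by_contra hne
  exact hθ i j hne (by rw [inner_sub_left]; exact sub_eq_zero.2 hij)

end UniformSphere

/-- In the application `F s θ` is a Wasserstein distance between projections, not known to be
measurable in `θ`; only its measurable bounds `g` and `h` enter dominated convergence. -/
theorem tendsto_lintegral_of_squeeze {α ι : Type*} [MeasurableSpace α] {μ : Measure α}
    {l : Filter ι} [l.IsCountablyGenerated] {F g h : ι → α → ℝ≥0∞} {f bound : α → ℝ≥0∞}
    (hg_meas : ∀ᶠ s in l, Measurable (g s)) (hh_meas : ∀ᶠ s in l, Measurable (h s))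
    (hgF : ∀ᶠ s in l, g s ≤ F s) (hFh : ∀ᶠ s in l, F s ≤ h s)
    (h_bound : ∀ᶠ s in l, ∀ᵐ a ∂μ, h s a ≤ bound a) (h_fin : ∫⁻ a, bound a ∂μ ≠ ∞)
    (hg_lim : ∀ᵐ a ∂μ, Tendsto (g · a) l (𝓝 (f a)))
    (hh_lim : ∀ᵐ a ∂μ, Tendsto (h · a) l (𝓝 (f a))) :
    Tendsto (fun s => ∫⁻ a, F s a ∂μ) l (𝓝 (∫⁻ a, f a ∂μ)) := by
  have hg_bound : ∀ᶠ s in l, ∀ᵐ a ∂μ, g s a ≤ bound a := by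
    filter_upwards [hgF, hFh, h_bound] with s hgFs hFhs hbs
    filter_upwards [hbs] with a ha using (hgFs a).trans ((hFhs a).trans ha)
  refine tendsto_of_tendsto_of_tendsto_of_le_of_le'
    (tendsto_lintegral_filter_of_dominated_convergence bound hg_meas hg_bound h_fin hg_lim)
    (tendsto_lintegral_filter_of_dominated_convergence bound hh_meas h_bound h_fin hh_lim) ?_ ?_
  · filter_upwards [hgF] with s hs using lintegral_mono hs
  · filter_upwards [hFh] with s hs using lintegral_mono hs

theorem ofReal_dist_inner_sq_div_sq {E : Type*} [NormedAddCommGroup E] [InnerProductSpace ℝ E]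
    (x : ℝ → E) (w : E) {s t : ℝ} (hst : s ≠ t) :
    ENNReal.ofReal (dist ⟪x s, w⟫ ⟪x t, w⟫ ^ 2) / ENNReal.ofReal ((s - t) ^ 2) =
      ENNReal.ofReal (⟪slope x t s, w⟫ ^ 2) := by
  rw [← ENNReal.ofReal_div_of_pos (sq_pos_of_ne_zero (sub_ne_zero.2 hst)), slope_def_module,
    real_inner_smul_left, inner_sub_left, Real.dist_eq, sq_abs]
  congr 1
  field_simp

section DiscreteCurve

variable {d n : ℕ}

noncomputable def meanInnerSq (w : Fin n → Euc d) (θ : Euc d) : ℝ≥0∞ :=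
  (n : ℝ≥0∞)⁻¹ * ∑ i, ENNReal.ofReal (⟪w i, θ⟫ ^ 2)

theorem lintegral_meanInnerSq_uniformSphere (hd : 0 < d) (hn : 0 < n) (w : Fin n → Euc d) :
    ∫⁻ θ, meanInnerSq w θ ∂uniformSphere d = ENNReal.ofReal (1 / (d * n) * ∑ i, ‖w i‖ ^ 2) := by
  have hd' : (0 : ℝ) < d := by exact_mod_cast hd
  unfold meanInnerSq
  rw [lintegral_const_mul _ (by fun_prop), lintegral_finsetSum _ fun _ _ => by fun_prop]
  simp only [lintegral_inner_sq_uniformSphere hd, ← ENNReal.ofReal_natCast d,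
    ← ENNReal.ofReal_div_of_pos hd']
  rw [← ENNReal.ofReal_sum_of_nonneg fun _ _ => by positivity, ← ENNReal.ofReal_natCast,
    ← ENNReal.ofReal_inv_of_pos (by exact_mod_cast hn), ← ENNReal.ofReal_mul (by positivity),
    ← Finset.sum_div]
  congr 1
  field_simp

theorem projMeas_empirical (a : Fin n → Euc d) (θ : sphere (0 : Euc d) 1) :
    projMeas d (empirical a) θ = empirical fun i => ⟪a i, (θ : Euc d)⟫ :=
  map_empirical (by fun_prop) a

theorem SW2sq_div_eq_lintegral (μ ν : Measure (Euc d)) {c : ℝ≥0∞} (hc : c ≠ 0) :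
    SW2sq d μ ν / c = ∫⁻ θ, W2sq (projMeas d μ θ) (projMeas d ν θ) / c ∂uniformSphere d := by
  simp only [div_eq_mul_inv]
  exact (lintegral_mul_const' _ _ (ENNReal.inv_ne_top.2 hc)).symm

variable (x : Fin n → ℝ → Euc d) {s t : ℝ}

theorem W2sq_projMeas_empirical_div_le (θ : sphere (0 : Euc d) 1) (hst : s ≠ t) :
    W2sq (projMeas d (empirical (x · s)) θ) (projMeas d (empirical (x · t)) θ) /
        ENNReal.ofReal ((s - t) ^ 2) ≤ meanInnerSq (fun i => slope (x i) t s) θ := by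
  rw [projMeas_empirical, projMeas_empirical, meanInnerSq]
  refine (ENNReal.div_le_div_right (W2sq_empirical_le _ _) _).trans_eq ?_
  simp only [div_eq_mul_inv, mul_assoc, Finset.sum_mul]
  simp only [← div_eq_mul_inv, ofReal_dist_inner_sq_div_sq _ _ hst]

theorem le_W2sq_projMeas_empirical_div (θ : sphere (0 : Euc d) 1) :
    (n : ℝ≥0∞)⁻¹ * ∑ j,
        (⨅ i, ENNReal.ofReal (dist ⟪x i s, (θ : Euc d)⟫ ⟪x j t, (θ : Euc d)⟫ ^ 2)) /
          ENNReal.ofReal ((s - t) ^ 2) ≤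
      W2sq (projMeas d (empirical (x · s)) θ) (projMeas d (empirical (x · t)) θ) /
        ENNReal.ofReal ((s - t) ^ 2) := by
  rw [projMeas_empirical, projMeas_empirical]
  refine le_trans (le_of_eq ?_) (ENNReal.div_le_div_right (le_W2sq_empirical _ _) _)
  simp only [div_eq_mul_inv, mul_assoc, Finset.sum_mul]

variable {x} {v : Fin n → Euc d}

theorem tendsto_meanInnerSq_slope (hn : 0 < n) (hx : ∀ i, HasDerivAt (x i) (v i) t)
    (θ : sphere (0 : Euc d) 1) :
    Tendsto (fun s => meanInnerSq (fun i => slope (x i) t s) θ) (𝓝[≠] t)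
      (𝓝 (meanInnerSq v θ)) :=
  ENNReal.Tendsto.const_mul (tendsto_finsetSum _ fun i _ => ENNReal.tendsto_ofReal
      ((((hasDerivAt_iff_tendsto_slope.1 (hx i))).inner tendsto_const_nhds).pow 2))
    (Or.inr (by simp [hn.ne']))

theorem eventually_meanInnerSq_slope_le (hx : ∀ i, HasDerivAt (x i) (v i) t) :
    ∀ᶠ s in 𝓝[≠] t, ∀ θ : sphere (0 : Euc d) 1,
      meanInnerSq (fun i => slope (x i) t s) θ ≤
        (n : ℝ≥0∞)⁻¹ * ∑ i, ENNReal.ofReal (‖v i‖ ^ 2 + 1) := by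
  filter_upwards [eventually_all.2 fun i =>
    ((hasDerivAt_iff_tendsto_slope.1 (hx i)).norm.pow 2).eventually
      (eventually_le_nhds (lt_add_one _))] with s hs θ
  unfold meanInnerSq
  gcongr with i
  refine (sq_le_sq.2 ?_).trans (hs i)
  simpa [norm_eq_of_mem_sphere θ] using abs_real_inner_le_norm (slope (x i) t s) (θ : Euc d)

theorem ae_tendsto_iInf_dist_sq_div (hn : 0 < n) (hx : ∀ i, HasDerivAt (x i) (v i) t)
    (hinj : Function.Injective (x · t)) :
    ∀ᵐ θ : sphere (0 : Euc d) 1 ∂uniformSphere d, Tendsto (fun s => (n : ℝ≥0∞)⁻¹ *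
        ∑ j, (⨅ i, ENNReal.ofReal (dist ⟪x i s, (θ : Euc d)⟫ ⟪x j t, (θ : Euc d)⟫ ^ 2)) /
          ENNReal.ofReal ((s - t) ^ 2))
      (𝓝[≠] t) (𝓝 (meanInnerSq v θ)) := by
  filter_upwards [ae_injective_inner_uniformSphere hinj] with θ hθ
  have hcont i : Tendsto (fun s => ⟪x i s, (θ : Euc d)⟫) (𝓝[≠] t) (𝓝 ⟪x i t, (θ : Euc d)⟫) :=
    ((hx i).continuousAt.tendsto.inner tendsto_const_nhds).mono_left nhdsWithin_le_nhds
  refine (tendsto_meanInnerSq_slope hn hx θ).congr' ?_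
  filter_upwards [eventually_iInf_dist_sq_eq hθ hcont, self_mem_nhdsWithin] with s hs hst
  simp only [meanInnerSq, hs, ofReal_dist_inner_sq_div_sq _ _ hst]

end DiscreteCurve

theorem tendsto_SW2sq_empirical_div_sq {d n : ℕ} (hd : 0 < d) (hn : 0 < n)
    {x : Fin n → ℝ → Euc d} {v : Fin n → Euc d} {t : ℝ}
    (hx : ∀ i, HasDerivAt (x i) (v i) t) (hinj : Function.Injective (x · t)) :
    Tendsto (fun s => SW2sq d (empirical (x · s)) (empirical (x · t)) /
        ENNReal.ofReal ((s - t) ^ 2))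
      (𝓝[≠] t) (𝓝 (ENNReal.ofReal (1 / (d * n) * ∑ i, ‖v i‖ ^ 2))) := by
  have := isProbabilityMeasure_uniformSphere hd
  have hne : ∀ᶠ s in 𝓝[≠] t, s ≠ t := self_mem_nhdsWithin
  have hlower_meas (s : ℝ) : Measurable fun θ : sphere (0 : Euc d) 1 => (n : ℝ≥0∞)⁻¹ *
      ∑ j, (⨅ i, ENNReal.ofReal (dist ⟪x i s, (θ : Euc d)⟫ ⟪x j t, (θ : Euc d)⟫ ^ 2)) /
        ENNReal.ofReal ((s - t) ^ 2) :=
    (Finset.measurable_sum _ fun _ _ =>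
      (Measurable.iInf fun _ => by fun_prop).div_const _).const_mul _
  rw [← lintegral_meanInnerSq_uniformSphere hd hn]
  refine (tendsto_lintegral_of_squeeze (.of_forall hlower_meas)
    (.of_forall fun s => by unfold meanInnerSq; fun_prop)
    (.of_forall fun s θ => le_W2sq_projMeas_empirical_div x θ)
    (hne.mono fun s hst θ => W2sq_projMeas_empirical_div_le x θ hst)
    ((eventually_meanInnerSq_slope_le hx).mono fun s hs => .of_forall (hs ·))
    (by simp [ENNReal.mul_eq_top, hn.ne']) (ae_tendsto_iInf_dist_sq_div hn hx hinj)
    (.of_forall (tendsto_meanInnerSq_slope hn hx))).congr' ?_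
  filter_upwards [hne] with s hst
  exact (SW2sq_div_eq_lintegral _ _ (by simpa using sub_ne_zero.2 hst)).symm

theorem SW2r_div_abs_eq {d : ℕ} (μ ν : Measure (Euc d)) (r : ℝ) :
    SW2r d μ ν / |r| = √((SW2sq d μ ν / ENNReal.ofReal (r ^ 2)).toReal) := by
  rw [ENNReal.toReal_div, ENNReal.toReal_ofReal (sq_nonneg r), Real.sqrt_div' _ (sq_nonneg r),
    Real.sqrt_sq_eq_abs, SW2r, SW2, ← ENNReal.toReal_rpow, Real.sqrt_eq_rpow]

theorem SW2_metric_derivative_discrete_general (d n : ℕ) (hd : 0 < d) (hn : 0 < n)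
    (I : Set ℝ)
    (x : Fin n → ℝ → Euc d) (v : Fin n → ℝ → Euc d)
    (hderiv : ∀ i, ∀ t ∈ I, HasDerivAt (x i) (v i t) t)
    (hdistinct : ∀ t ∈ I, ∀ i j : Fin n, i ≠ j → x i t ≠ x j t)
    (μ : ℝ → Measure (Euc d))
    (hμ : ∀ t, μ t = ((n : ℝ≥0∞))⁻¹ • ∑ i : Fin n, Measure.dirac (x i t)) :
    ∀ t ∈ I,
      Tendsto (fun s => SW2r d (μ s) (μ t) / |s - t|) (𝓝[I \ {t}] t)
        (𝓝 (Real.sqrt ((1 / (d * n) : ℝ) * ∑ i : Fin n, ‖v i t‖ ^ 2))) := by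
  intro t ht
  obtain rfl : μ = fun s => empirical (x · s) := funext hμ
  have hinj : Function.Injective (x · t) := fun i j hij =>
    by_contra fun hne => hdistinct t ht i j hne hij
  have hSW2sq := tendsto_SW2sq_empirical_div_sq hd hn (fun i => hderiv i t ht) hinj
  have hlim := ((ENNReal.tendsto_toReal ENNReal.ofReal_ne_top).comp hSW2sq).sqrt
  rw [ENNReal.toReal_ofReal (by positivity)] at hlim
  simp only [SW2r_div_abs_eq]
  exact hlim.mono_left (nhdsWithin_mono _ (Set.sdiff_subset_compl _ _))

/-- for a curve of n equal point masses with continuously differentiable, distinct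
trajectories, the SW₂ metric derivative satisfies |μ'|_{SW}(t)² = (1/d)·(1/n) Σ |x_i'(t)|². -/
theorem SW2_metric_derivative_discrete (d n : ℕ) (hd : 0 < d) (hn : 0 < n)
    (I : Set ℝ) (hI : IsOpen I) (hIconn : I.OrdConnected)
    (x : Fin n → ℝ → Euc d) (v : Fin n → ℝ → Euc d)
    (hderiv : ∀ i, ∀ t ∈ I, HasDerivAt (x i) (v i t) t)
    (hcont : ∀ i, ContinuousOn (v i) I)
    (hdistinct : ∀ t ∈ I, ∀ i j : Fin n, i ≠ j → x i t ≠ x j t)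
    (μ : ℝ → Measure (Euc d))
    (hμ : ∀ t, μ t = ((n : ℝ≥0∞))⁻¹ • ∑ i : Fin n, Measure.dirac (x i t)) :
    ∀ t ∈ I,
      Tendsto (fun s => SW2r d (μ s) (μ t) / |s - t|) (𝓝[I \ {t}] t)
        (𝓝 (Real.sqrt ((1 / (d * n) : ℝ) * ∑ i : Fin n, ‖v i t‖ ^ 2))) :=
  SW2_metric_derivative_discrete_general d n hd hn I x v hderiv hdistinct μ hμ
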